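/- Let A, B be finite nonempty sets of integers with min A = min B = 0, max A = M, max B = N, M ≥ N, |A+B| = |A|+|B|-1+r, h_A = |[0,M]\A| ≤ |B| - 2, and r ≤ |B| - 2 - δ(A,B), where δ(A,B) = 1 if A ⊆ B and 0 otherwise. If x ∈ [0,M] \ A satisfies x ∉ A+B and y ∈ [0,M] \ A satisfies y + N ∉ A+B, then x < y. -/

import Mathlib

/-!
Suppose `y ≤ x`. As `h_A < |B|`, every `v ∈ [N, M]` lies in `A + B` (otherwise `A` and `v - B`
would be disjoint in `[0, M]`), so the missing sums are the lower gaps `p ∈ [0, N)` and the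
upper gaps `q + M` with `q ∈ [0, N]`; `x` is a lower and `y - (M - N)` an upper gap. Take an
upper gap `q` and a lower gap `p ≥ q` as close as possible. Reflecting `B` about `p` and about
`q + M` gives holes of `A`, which bounds `|B|` by `h_A + 1 + [M = N]` plus the number of common
holes of `A` and `B` strictly between `q` and `p`. Those common holes, the gaps and (if `M = N`)
the elements of `A \ B` are disjoint holes of `B`, while there are at least `h_A + h_B - r`
gaps. Together this forces `r ≥ |B| - 1 - δ(A, B)`.
-/

open scoped Pointwise
open scoped Classical
open Finset

lemma Finset.subset_Icc_min'_max' {α : Type*} [LinearOrder α] [LocallyFiniteOrder α]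
    (s : Finset α) (hs : s.Nonempty) : s ⊆ Icc (s.min' hs) (s.max' hs) :=
  fun a ha => mem_Icc.2 ⟨s.min'_le a ha, s.le_max' a ha⟩

lemma Finset.sub_notMem_of_notMem_add {G : Type*} [AddGroup G] [DecidableEq G]
    {A B : Finset G} {v b : G} (hv : v ∉ A + B) (hb : b ∈ B) : v - b ∉ A :=
  fun h => hv (by simpa using add_mem_add h hb)

lemma Int.exists_closest_pair {L R : Finset ℤ} {p₀ q₀ : ℤ} (hp₀ : p₀ ∈ L)
    (hq₀ : q₀ ∈ R) (h : q₀ ≤ p₀) :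
    ∃ p ∈ L, ∃ q ∈ R, q ≤ p ∧ Disjoint L (Ioo q p) ∧ Disjoint R (Ioc q p) := by
  obtain ⟨⟨p, q⟩, hpq, hmin⟩ := exists_min_image {pq ∈ L ×ˢ R | pq.2 ≤ pq.1}
    (fun pq => pq.1 - pq.2) ⟨(p₀, q₀), by simp [hp₀, hq₀, h]⟩
  simp only [mem_filter, mem_product] at hpq hmin
  refine ⟨p, hpq.1.1, q, hpq.1.2, hpq.2, disjoint_left.2 fun e he hqe => ?_,
    disjoint_left.2 fun v hv hqv => ?_⟩
  · have := hmin (e, q) ⟨⟨he, hpq.1.2⟩, (mem_Ioo.1 hqe).1.le⟩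
    simp only [mem_Ioo] at hqe this
    omega
  · have := hmin (p, v) ⟨⟨hpq.1.1, hv⟩, (mem_Ioc.1 hqv).2⟩
    simp only [mem_Ioc] at hqv this
    omega

section Gaps

variable {A B : Finset ℤ} {M N : ℤ}

noncomputable def lowerGaps (A B : Finset ℤ) (M : ℤ) : Finset ℤ :=
  {v ∈ Icc 0 M | v ∉ A + B}

noncomputable def upperGaps (A B : Finset ℤ) (M N : ℤ) : Finset ℤ :=
  {v ∈ Icc 0 N | v + M ∉ A + B}

lemma card_Icc_le_card_add_add_card_gaps :
    #(Icc 0 (M + N)) ≤ #(A + B) + #(lowerGaps A B M) + #(upperGaps A B M N) := by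
  have hcover : Icc 0 (M + N) ⊆
      A + B ∪ lowerGaps A B M ∪ (upperGaps A B M N).image (· + M) := by
    intro c hc
    simp only [mem_Icc] at hc
    by_cases hcAB : c ∈ A + B
    · simp [hcAB]
    by_cases hcM : c ≤ M
    · simp [lowerGaps, hcAB, hc.1, hcM]
    · simp only [upperGaps, mem_union, mem_image, mem_filter, mem_Icc]
      exact Or.inr ⟨c - M, ⟨⟨by omega, by omega⟩, by simpa using hcAB⟩, by ring⟩
  calc #(Icc 0 (M + N))
      ≤ #(A + B ∪ lowerGaps A B M ∪ (upperGaps A B M N).image (· + M)) := card_le_card hcover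
    _ ≤ #(A + B) + #(lowerGaps A B M) + #((upperGaps A B M N).image (· + M)) :=
      (card_union_le _ _).trans (Nat.add_le_add_right (card_union_le _ _) _)
    _ ≤ _ := Nat.add_le_add_left card_image_le _

lemma mem_add_of_le_of_le (hB : B ⊆ Icc 0 N)
    (hhole : #(Icc 0 M \ A) < #B) {v : ℤ} (hNv : N ≤ v) (hvM : v ≤ M) : v ∈ A + B := by
  by_contra hv
  have hsub : B.image (v - ·) ⊆ Icc 0 M \ A := by
    intro z hz
    obtain ⟨b, hb, rfl⟩ := mem_image.1 hz
    have := mem_Icc.1 (hB hb)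
    exact mem_sdiff.2 ⟨mem_Icc.2 ⟨by omega, by omega⟩, sub_notMem_of_notMem_add hv hb⟩
  have := card_le_card hsub
  rw [card_image_of_injective _ sub_right_injective] at this
  omega

lemma lowerGaps_subset (hB : B ⊆ Icc 0 N) (h0A : 0 ∈ A)
    (hhole : #(Icc 0 M \ A) < #B) : lowerGaps A B M ⊆ Icc 0 N \ B := by
  intro v hv
  simp only [lowerGaps, mem_filter, mem_Icc] at hv
  have hvN : v ≤ N := by
    by_contra hvN
    exact hv.2 (mem_add_of_le_of_le hB hhole (by omega) hv.1.2)
  exact mem_sdiff.2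
    ⟨mem_Icc.2 ⟨hv.1.1, hvN⟩, fun hvB => hv.2 (by simpa using add_mem_add h0A hvB)⟩

lemma upperGaps_subset (hMA : M ∈ A) : upperGaps A B M N ⊆ Icc 0 N \ B := by
  intro v hv
  simp only [upperGaps, mem_filter] at hv
  exact mem_sdiff.2 ⟨hv.1, fun hvB => hv.2 (by simpa [add_comm] using add_mem_add hMA hvB)⟩

lemma sub_mem_upperGaps (hB : B ⊆ Icc 0 N) (hhole : #(Icc 0 M \ A) < #B) {y : ℤ} (hy0 : 0 ≤ y)
    (hyM : y ≤ M) (hyN : y + N ∉ A + B) : y - (M - N) ∈ upperGaps A B M N := by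
  have hMy : M ≤ y + N := by
    by_contra! h
    exact hyN (mem_add_of_le_of_le hB hhole (by omega) h.le)
  simp only [upperGaps, mem_filter, mem_Icc]
  exact ⟨⟨by omega, by omega⟩, by rwa [show y - (M - N) + M = y + N by ring]⟩

/-- Reflecting `B ∩ (-∞, p]` about `p` and `B ∩ [q, ∞)` about `q + M` gives two sets of holes
of `A`, which can only overlap in `[q + M - N, p]`. -/
lemma card_add_card_filter_le (hB : B ⊆ Icc 0 N) (hNM : N ≤ M) {p q : ℤ}
    (hp : p ∉ A + B) (hq : q + M ∉ A + B) (hq0 : 0 ≤ q) (hqp : q ≤ p) (hpM : p ≤ M) :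
    #B + #{b ∈ B | q ≤ b ∧ b ≤ p} ≤ #(Icc 0 M \ A) + #(Icc (q + (M - N)) p \ A) := by
  set X := {b ∈ B | b ≤ p}.image (p - ·)
  set Y := {b ∈ B | q ≤ b}.image (q + M - ·)
  have hX : ∀ z ∈ X, z ∈ Icc 0 M \ A ∧ z ≤ p := by
    simp only [X, mem_image, mem_filter]
    rintro _ ⟨b, ⟨hb, hbp⟩, rfl⟩
    have := mem_Icc.1 (hB hb)
    exact ⟨mem_sdiff.2 ⟨mem_Icc.2 ⟨by omega, by omega⟩, sub_notMem_of_notMem_add hp hb⟩,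
      by omega⟩
  have hY : ∀ z ∈ Y, z ∈ Icc 0 M \ A ∧ q + (M - N) ≤ z := by
    simp only [Y, mem_image, mem_filter]
    rintro _ ⟨b, ⟨hb, hqb⟩, rfl⟩
    have := mem_Icc.1 (hB hb)
    exact ⟨mem_sdiff.2 ⟨mem_Icc.2 ⟨by omega, by omega⟩, sub_notMem_of_notMem_add hq hb⟩,
      by omega⟩
  have hXY : X ∩ Y ⊆ Icc (q + (M - N)) p \ A := by
    intro z hz
    obtain ⟨hzX, hzY⟩ := mem_inter.1 hz
    exact mem_sdiff.2 ⟨mem_Icc.2 ⟨(hY z hzY).2, (hX z hzX).2⟩, (mem_sdiff.1 (hX z hzX).1).2⟩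
  calc #B + #{b ∈ B | q ≤ b ∧ b ≤ p}
      = #X + #Y := by
        rw [card_image_of_injective _ sub_right_injective,
          card_image_of_injective _ sub_right_injective,
          ← card_union_add_card_inter {b ∈ B | b ≤ p}, ← filter_or, ← filter_and,
          filter_true_of_mem (p := fun b => b ≤ p ∨ q ≤ b) fun b _ => by omega]
        simp only [and_comm]
    _ = #(X ∪ Y) + #(X ∩ Y) := (card_union_add_card_inter X Y).symm
    _ ≤ _ := add_le_add (card_le_card (union_subset (fun z hz => (hX z hz).1)
        (fun z hz => (hY z hz).1))) (card_le_card hXY)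

lemma disjoint_lowerGaps_upperGaps (hB : B ⊆ Icc 0 N) (hNM : N ≤ M)
    (hhole : #(Icc 0 M \ A) + 2 ≤ #B) : Disjoint (lowerGaps A B M) (upperGaps A B M N) := by
  refine disjoint_left.2 fun v hvL hvR => ?_
  simp only [lowerGaps, upperGaps, mem_filter, mem_Icc] at hvL hvR
  have hcount := card_add_card_filter_le hB hNM hvL.2 hvR.2 hvR.1.1 le_rfl hvL.1.2
  have hshort : #(Icc (v + (M - N)) v \ A) ≤ 1 :=
    (card_le_card sdiff_subset).trans (by rw [Int.card_Icc]; omega)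
  omega

lemma card_Icc_sdiff_le (hNM : N ≤ M) (p q : ℤ) :
    #(Icc (q + (M - N)) p \ A) ≤
      #{b ∈ B | q ≤ b ∧ b ≤ p} + (#(Ioo q p \ (A ∪ B)) + 1) + #(Icc (q + (M - N)) q) := by
  have hsub : Icc (q + (M - N)) p \ A ⊆ {b ∈ B | q ≤ b ∧ b ≤ p} ∪
      insert p (Ioo q p \ (A ∪ B)) ∪ Icc (q + (M - N)) q := by
    intro z hz
    simp only [mem_sdiff, mem_Icc] at hz
    simp only [mem_union, mem_insert, mem_filter, mem_sdiff, mem_Ioo, mem_Icc]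
    by_cases hzB : z ∈ B
    · exact Or.inl (Or.inl ⟨hzB, by omega, hz.1.2⟩)
    · by_cases hzq : z ≤ q
      · exact Or.inr ⟨hz.1.1, hzq⟩
      · by_cases hzp : z = p
        · exact Or.inl (Or.inr (Or.inl hzp))
        · exact Or.inl (Or.inr (Or.inr ⟨⟨by omega, by omega⟩, by tauto⟩))
  calc _ ≤ _ := card_le_card hsub
    _ ≤ _ := (card_union_le _ _).trans (Nat.add_le_add_right
        ((card_union_le _ _).trans (Nat.add_le_add_left (card_insert_le _ _) _)) _)

lemma card_le_card_sdiff_add_card_Ioo_sdiff (hB : B ⊆ Icc 0 N) (hNM : N ≤ M) {p q : ℤ}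
    (hp : p ∈ lowerGaps A B M) (hq : q ∈ upperGaps A B M N) (hqp : q ≤ p) :
    #B ≤ #(Icc 0 M \ A) + (#(Ioo q p \ (A ∪ B)) + 1) + (N + 1 - M).toNat := by
  simp only [lowerGaps, upperGaps, mem_filter, mem_Icc] at hp hq
  have hcount := card_add_card_filter_le hB hNM hp.2 hq.2 hq.1.1 hqp hp.1.2
  have hmid := card_Icc_sdiff_le (A := A) (B := B) hNM p q
  rw [Int.card_Icc] at hmid
  omega

lemma card_gaps_add_card_Ioo_sdiff_add_card_le (hB : B ⊆ Icc 0 N) (hNM : N ≤ M)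
    (h0A : 0 ∈ A) (hMA : M ∈ A) (h0B : 0 ∈ B) (hhole : #(Icc 0 M \ A) + 2 ≤ #B)
    {p q : ℤ} (hp : p ∈ lowerGaps A B M) (hq : q ∈ upperGaps A B M N)
    (hLgap : Disjoint (lowerGaps A B M) (Ioo q p))
    (hRgap : Disjoint (upperGaps A B M N) (Ioc q p)) {W : Finset ℤ} (hWA : W ⊆ A)
    (hWB : W ⊆ Icc 0 N \ B) (hWR : Disjoint W (upperGaps A B M N)) :
    #(lowerGaps A B M) + #(upperGaps A B M N) + #(Ioo q p \ (A ∪ B)) + #W ≤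
      #(Icc 0 N \ B) := by
  have hL := lowerGaps_subset (M := M) hB h0A (by omega)
  have hV : Ioo q p \ (A ∪ B) ⊆ Icc 0 N \ B := by
    have := mem_Icc.1 (mem_sdiff.1 (hL hp)).1
    simp only [upperGaps, mem_filter, mem_Icc] at hq
    intro z hz
    simp only [mem_sdiff, mem_Ioo, mem_union, not_or, mem_Icc] at hz ⊢
    exact ⟨⟨by omega, by omega⟩, hz.2.2⟩
  have hLA : Disjoint (lowerGaps A B M) A := disjoint_right.2 fun a ha haL =>
    (mem_filter.1 haL).2 (by simpa using add_mem_add ha h0B)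
  rw [← card_union_of_disjoint (disjoint_lowerGaps_upperGaps hB hNM hhole),
    ← card_union_of_disjoint (disjoint_union_left.2 ⟨hLgap.mono_right sdiff_subset,
      hRgap.mono_right (sdiff_subset.trans Ioo_subset_Ioc_self)⟩),
    ← card_union_of_disjoint (disjoint_union_left.2 ⟨disjoint_union_left.2
      ⟨hLA.mono_right hWA, hWR.symm⟩, disjoint_sdiff_self_left.mono_right
        (hWA.trans subset_union_left)⟩)]
  exact card_le_card (union_subset (union_subset (union_subset hL (upperGaps_subset hMA)) hV) hWB)

lemma card_sdiff_add_card_sdiff_add_card_add_card_le (hA : A ⊆ Icc 0 M) (hB : B ⊆ Icc 0 N)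
    (hM : 0 ≤ M) (hN : 0 ≤ N) :
    #(Icc 0 M \ A) + #(Icc 0 N \ B) + #A + #B ≤
      #(A + B) + 1 + #(lowerGaps A B M) + #(upperGaps A B M N) := by
  have hsum := card_Icc_le_card_add_add_card_gaps (A := A) (B := B) (M := M) (N := N)
  rw [Int.card_Icc] at hsum
  have hAc := card_sdiff_add_card_eq_card hA
  have hBc := card_sdiff_add_card_eq_card hB
  rw [Int.card_Icc] at hAc hBc
  omega

end Gaps

theorem stmt8_general (A B : Finset ℤ) (hA : A.Nonempty) (hB : B.Nonempty) (M N r : ℤ)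
    (hminA : A.min' hA = 0) (hminB : B.min' hB = 0)
    (hmaxA : A.max' hA = M) (hmaxB : B.max' hB = N) (hMN : N ≤ M)
    (hr : ((A + B).card : ℤ) = (A.card : ℤ) + (B.card : ℤ) - 1 + r)
    (hhole : ((Finset.Icc 0 M \ A).card : ℤ) ≤ (B.card : ℤ) - 2)
    (hrb : r ≤ (B.card : ℤ) - 2 - (if A ⊆ B then 1 else 0))
    (x y : ℤ) (hx : x ∈ Finset.Icc 0 M) (hxL : x ∉ A + B)
    (hy : y ∈ Finset.Icc 0 M) (hyR : y + N ∉ A + B) :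
    x < y := by
  by_contra! hyx
  have hAI : A ⊆ Icc 0 M := hminA ▸ hmaxA ▸ A.subset_Icc_min'_max' hA
  have hBI : B ⊆ Icc 0 N := hminB ▸ hmaxB ▸ B.subset_Icc_min'_max' hB
  have h0A : 0 ∈ A := hminA ▸ A.min'_mem hA
  have hMA : M ∈ A := hmaxA ▸ A.max'_mem hA
  have h0B : 0 ∈ B := hminB ▸ B.min'_mem hB
  have hNB : N ∈ B := hmaxB ▸ B.max'_mem hB
  have hhole' : #(Icc 0 M \ A) + 2 ≤ #B := by omega
  simp only [mem_Icc] at hx hy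
  have hxL' : x ∈ lowerGaps A B M := by simp [lowerGaps, hx, hxL]
  have hyR' := sub_mem_upperGaps hBI (by omega) hy.1 (hyx.trans hx.2) hyR
  obtain ⟨p, hpL, q, hqR, hqp, hLgap, hRgap⟩ := Int.exists_closest_pair hxL' hyR' (by omega)
  have hBbound := card_le_card_sdiff_add_card_Ioo_sdiff hBI hMN hpL hqR hqp
  have hsum := card_sdiff_add_card_sdiff_add_card_add_card_le hAI hBI
    (mem_Icc.1 (hAI h0A)).2 (mem_Icc.1 (hBI h0B)).2
  rcases hMN.lt_or_eq with hlt | rfl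
  · have hAB : ¬ A ⊆ B := fun h => by linarith [(mem_Icc.1 (hBI (h hMA))).2]
    have hcount := card_gaps_add_card_Ioo_sdiff_add_card_le hBI hMN h0A hMA h0B hhole'
      hpL hqR hLgap hRgap (empty_subset A) (empty_subset _) (disjoint_empty_left _)
    simp only [hAB, if_false] at hrb
    omega
  · have hAR : Disjoint (A \ B) (upperGaps A B N N) := disjoint_left.2 fun a ha haR =>
      (mem_filter.1 haR).2 (by simpa [add_comm] using add_mem_add (mem_sdiff.1 ha).1 hNB)
    have hcount := card_gaps_add_card_Ioo_sdiff_add_card_le hBI hMN h0A hMA h0B hhole'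
      hpL hqR hLgap hRgap sdiff_subset (sdiff_subset_sdiff hAI le_rfl) hAR
    split_ifs at hrb with hAB
    · omega
    · have := card_pos.2 (sdiff_nonempty.2 hAB)
      omega

theorem stmt8 (A B : Finset ℤ) (hA : A.Nonempty) (hB : B.Nonempty) (M N r : ℤ)
    (hminA : A.min' hA = 0) (hminB : B.min' hB = 0)
    (hmaxA : A.max' hA = M) (hmaxB : B.max' hB = N) (hMN : N ≤ M)
    (hr : ((A + B).card : ℤ) = (A.card : ℤ) + (B.card : ℤ) - 1 + r)
    (hhole : ((Finset.Icc 0 M \ A).card : ℤ) ≤ (B.card : ℤ) - 2)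
    (hrb : r ≤ (B.card : ℤ) - 2 - (if A ⊆ B then 1 else 0))
    (x y : ℤ) (hx : x ∈ Finset.Icc 0 M) (hxA : x ∉ A) (hxL : x ∉ A + B)
    (hy : y ∈ Finset.Icc 0 M) (hyA : y ∉ A) (hyR : y + N ∉ A + B) :
    x < y :=
  stmt8_general A B hA hB M N r hminA hminB hmaxA hmaxB hMN hr hhole hrb x y hx hxL hy hyR
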